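/- Fix r ∈ (0,1). For each n ≥ 1 let θ*_n denote the unique zero in [(2n−1)π/(2n), π) of the strictly decreasing function f_n(θ) = cot(nθ) + ((1−r)/(1+r))·cot(θ/2). Then for all sufficiently large n, (2n−1)π/(2n) ≤ θ*_n ≤ 2nπ/(2n+1), and n·cot(θ*_n/2) → π/4 as n → ∞ (equivalently, cot(θ*_n/2) ~ π/(4n)). -/

import Mathlib

/-!
Write `θ = π - 2u` and `c = (1-r)/(1+r) < 1`. Then `f_n(θ) = 0` reads `cot(2nu) = c·tan u`, and
`θ ≥ (2n-1)π/(2n)` reads `0 < u ≤ π/(4n)`. If `u < π/(4n+2)`, then `2nu < π/2 - π/(4n+2)`, so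
`cot(2nu) > tan(π/(4n+2))`, whereas `c·tan u ≤ c·tan(π/(4n))`. Both `n·tan(π/(4n))` and
`n·tan(π/(4n+2))` tend to `π/4`, so `c < 1` rules this out for large `n`. Hence
`u ∈ [π/(4n+2), π/(4n)]`, and `n·cot(θ/2) = n·tan u` is squeezed to `π/4`.
-/

/-- The function `f_n(θ) = cot(nθ) + ((1-r)/(1+r))·cot(θ/2)`. -/
noncomputable def fcot (n : ℕ) (r : ℝ) (θ : ℝ) : ℝ :=
  Real.cot (n * θ) + ((1 - r) / (1 + r)) * Real.cot (θ / 2)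

open Real Filter Topology Set

namespace Real

lemma cot_pi_div_two_sub (x : ℝ) : cot (π / 2 - x) = tan x := by
  rw [← tan_inv_eq_cot, tan_pi_div_two_sub, inv_inv]

lemma cot_nat_mul_pi_sub (x : ℝ) (n : ℕ) : cot (n * π - x) = -cot x := by
  rw [← tan_inv_eq_cot, tan_nat_mul_pi_sub, inv_neg, tan_inv_eq_cot]

lemma tan_le_tan_of_nonneg_of_lt_pi_div_two {x y : ℝ} (hx : 0 ≤ x) (hy : y < π / 2)
    (hxy : x ≤ y) : tan x ≤ tan y :=
  strictMonoOn_tan.monotoneOn ⟨by linarith [pi_pos], hxy.trans_lt hy⟩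
    ⟨by linarith [pi_pos], hy⟩ hxy

lemma tendsto_mul_tan_of_tendsto_mul {ι : Type*} {l : Filter ι} {g x : ι → ℝ} {L : ℝ}
    (hx : Tendsto x l (𝓝[≠] 0)) (hL : Tendsto (fun i => g i * x i) l (𝓝 L)) :
    Tendsto (fun i => g i * tan (x i)) l (𝓝 L) := by
  have hslope : Tendsto (fun t => t⁻¹ * tan t) (𝓝[≠] 0) (𝓝 1) := by
    simpa using (hasDerivAt_tan (x := 0) (by simp)).tendsto_slope_zero
  have h := (hslope.comp hx).mul hL
  rw [one_mul] at h
  refine h.congr' ?_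
  filter_upwards [hx self_mem_nhdsWithin] with i (hi : x i ≠ 0)
  simp only [Function.comp_apply]
  field_simp

end Real

lemma tendsto_natCast_mul_tan_pi_div {a : ℝ} (ha : 0 < a) (b : ℝ) :
    Tendsto (fun n : ℕ => n * tan (π / (a * n + b))) atTop (𝓝 (π / a)) := by
  have hden : Tendsto (fun n : ℕ => a * n + b) atTop atTop :=
    tendsto_atTop_add_const_right _ b (tendsto_natCast_atTop_atTop.const_mul_atTop ha)
  refine tendsto_mul_tan_of_tendsto_mul (tendsto_nhdsWithin_iff.mpr
    ⟨tendsto_const_nhds.div_atTop hden, ?_⟩) ?_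
  · filter_upwards [hden.eventually_gt_atTop 0] with n hn
    exact (div_pos pi_pos hn).ne'
  · have h := (tendsto_natCast_div_add_atTop (b / a)).const_mul (π / a)
    rw [mul_one] at h
    refine h.congr' ?_
    filter_upwards [hden.eventually_gt_atTop 0] with n hn
    field_simp

lemma tendsto_natCast_mul_tan_pi_div_four_mul :
    Tendsto (fun n : ℕ => n * tan (π / (4 * n))) atTop (𝓝 (π / 4)) := by
  simpa using tendsto_natCast_mul_tan_pi_div (a := 4) (by norm_num) 0

lemma eventually_mul_tan_lt_tan {c : ℝ} (hc : c < 1) :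
    ∀ᶠ n : ℕ in atTop, c * tan (π / (4 * n)) < tan (π / (4 * n + 2)) := by
  have h42 := tendsto_natCast_mul_tan_pi_div (a := 4) (by norm_num) 2
  filter_upwards [(tendsto_natCast_mul_tan_pi_div_four_mul.const_mul c).eventually_lt h42
    (by nlinarith [pi_pos])] with n hlt
  rw [mul_left_comm] at hlt
  exact lt_of_mul_lt_mul_left hlt n.cast_nonneg

lemma pi_div_four_mul_lt_pi_div_two {m : ℝ} (hm : 1 / 2 < m) : π / (4 * m) < π / 2 :=
  div_lt_div_of_pos_left pi_pos two_pos (by linarith)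

lemma tendsto_natCast_mul_tan_of_mem_Icc {u : ℕ → ℝ}
    (hu : ∀ᶠ n : ℕ in atTop, u n ∈ Icc (π / (4 * n + 2)) (π / (4 * n))) :
    Tendsto (fun n : ℕ => n * tan (u n)) atTop (𝓝 (π / 4)) := by
  refine tendsto_of_tendsto_of_tendsto_of_le_of_le'
    (tendsto_natCast_mul_tan_pi_div (a := 4) (by norm_num) 2)
    tendsto_natCast_mul_tan_pi_div_four_mul ?_ ?_
  all_goals
    filter_upwards [hu, eventually_ge_atTop 1] with n ⟨hlo, hhi⟩ hn
    have hn' : (1 : ℝ) ≤ n := by exact_mod_cast hn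
    have hlt : π / (4 * n) < π / 2 := pi_div_four_mul_lt_pi_div_two (by linarith)
    have hpos : 0 < π / (4 * n + 2) := by positivity
    refine mul_le_mul_of_nonneg_left ?_ n.cast_nonneg
  · exact tan_le_tan_of_nonneg_of_lt_pi_div_two hpos.le (hhi.trans_lt hlt) hlo
  · exact tan_le_tan_of_nonneg_of_lt_pi_div_two (hpos.le.trans hlo) hlt hhi

lemma fcot_pi_sub_two_mul (n : ℕ) (r u : ℝ) :
    fcot n r (π - 2 * u) = (1 - r) / (1 + r) * tan u - cot (2 * n * u) := by
  rw [fcot, show (n : ℝ) * (π - 2 * u) = n * π - 2 * n * u by ring,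
    show (π - 2 * u) / 2 = π / 2 - u by ring, cot_nat_mul_pi_sub, cot_pi_div_two_sub]
  ring

lemma pi_div_le_of_cot_le_tan {m u : ℝ} (hm : 0 < m) (hu : 0 < u)
    (h : cot (2 * m * u) ≤ tan (π / (4 * m + 2))) : π / (4 * m + 2) ≤ u := by
  by_contra! hlt
  have hsum : 2 * m * (π / (4 * m + 2)) + π / (4 * m + 2) = π / 2 := by
    field_simp; ring
  have hpos : 0 < π / (4 * m + 2) := by positivity
  have h2mu : 2 * m * u < 2 * m * (π / (4 * m + 2)) := by gcongr
  have : tan (π / (4 * m + 2)) < tan (π / 2 - 2 * m * u) :=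
    tan_lt_tan_of_nonneg_of_lt_pi_div_two hpos.le (by nlinarith) (by linarith)
  rw [tan_pi_div_two_sub, tan_inv_eq_cot] at this
  linarith

lemma half_pi_sub_mem_Icc_of_fcot_eq_zero {n : ℕ} (hn : 1 ≤ n) {r θ : ℝ}
    (hr : 0 ≤ (1 - r) / (1 + r)) (hθ : θ ∈ Ico ((2 * n - 1) * π / (2 * n)) π)
    (h0 : fcot n r θ = 0)
    (hkey : (1 - r) / (1 + r) * tan (π / (4 * n)) < tan (π / (4 * n + 2))) :
    (π - θ) / 2 ∈ Icc (π / (4 * n + 2)) (π / (4 * n)) := by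
  set u := (π - θ) / 2 with hu_def
  have hn' : (1 : ℝ) ≤ n := by exact_mod_cast hn
  have hu0 : 0 < u := by linarith [hθ.2]
  have hu : u ≤ π / (4 * n) := by
    have : (2 * n - 1) * π / (2 * n) = π - 2 * (π / (4 * n)) := by field_simp; ring
    linarith [hθ.1]
  have hcot : cot (2 * n * u) = (1 - r) / (1 + r) * tan u := by
    rw [show θ = π - 2 * u by ring, fcot_pi_sub_two_mul] at h0
    linarith
  refine ⟨pi_div_le_of_cot_le_tan (by positivity) hu0 ?_, hu⟩
  calc cot (2 * n * u) = (1 - r) / (1 + r) * tan u := hcot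
    _ ≤ (1 - r) / (1 + r) * tan (π / (4 * n)) := by
      gcongr
      exact tan_le_tan_of_nonneg_of_lt_pi_div_two hu0.le
        (pi_div_four_mul_lt_pi_div_two (by linarith)) hu
    _ ≤ tan (π / (4 * n + 2)) := hkey.le

theorem stmt13 (r : ℝ) (hr : r ∈ Set.Ioo (0 : ℝ) 1) (θ : ℕ → ℝ)
    (hθ : ∀ n : ℕ, 1 ≤ n →
      θ n ∈ Set.Ico ((2 * n - 1) * Real.pi / (2 * n)) Real.pi ∧ fcot n r (θ n) = 0) :
    (∃ N : ℕ, ∀ n ≥ N,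
      (2 * n - 1) * Real.pi / (2 * n) ≤ θ n ∧ θ n ≤ 2 * n * Real.pi / (2 * n + 1)) ∧
      Filter.Tendsto (fun n : ℕ => n * Real.cot (θ n / 2)) Filter.atTop
        (nhds (Real.pi / 4)) := by
  obtain ⟨hr0, hr1⟩ := hr
  have hc0 : 0 ≤ (1 - r) / (1 + r) := div_nonneg (by linarith) (by linarith)
  have hc1 : (1 - r) / (1 + r) < 1 := (div_lt_one (by linarith)).mpr (by linarith)
  obtain ⟨N, hN⟩ :=
    eventually_atTop.mp ((eventually_mul_tan_lt_tan hc1).and (eventually_ge_atTop 1))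
  have hu : ∀ n ≥ N, (π - θ n) / 2 ∈ Icc (π / (4 * n + 2)) (π / (4 * n)) := fun n hn =>
    half_pi_sub_mem_Icc_of_fcot_eq_zero (hN n hn).2 hc0 (hθ n (hN n hn).2).1
      (hθ n (hN n hn).2).2 (hN n hn).1
  refine ⟨⟨N, fun n hn => ⟨(hθ n (hN n hn).2).1.1, ?_⟩⟩, ?_⟩
  · have : 2 * n * π / (2 * n + 1) = π - 2 * (π / (4 * n + 2)) := by field_simp; ring
    linarith [(hu n hn).1]
  · refine (tendsto_natCast_mul_tan_of_mem_Icc (eventually_atTop.mpr ⟨N, hu⟩)).congr fun n => ?_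
    rw [← cot_pi_div_two_sub, show π / 2 - (π - θ n) / 2 = θ n / 2 by ring]
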